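/- arXiv:2002.01538 — 3 statements merged into one kernel-verified Lean document; each statement's English description precedes it below -/
import Mathlib

section
/- Let A and B be power series over a ring R, with A of the form 1 + a·tⁿ + (higher order terms) and B of the form 1 + b·tᵐ + (higher order terms), where a, b ∈ R and n, m ≥ 1. Then the multiplicative commutator A·B·A⁻¹·B⁻¹ in the group of units of R⟦t⟧ equals 1 + (ab - ba)·t^{n+m} + (terms of order > n+m); that is, the coefficient of tᵏ of the commutator vanishes for 1 ≤ k < n+m and the coefficient of t^{n+m} equals ab - ba. -/
/-!
Write `A = 1 + tⁿ F` and `B = 1 + tᵐ G`. In any ring `A B A⁻¹ B⁻¹ = 1 + (A B - B A) (B A)⁻¹`,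
and since `t` is central, `A B - B A = t^(n+m) (F G - G F)`; the constant terms of `F`, `G` and
`(B A)⁻¹` are `a`, `b` and `1`.
-/

open PowerSeries

theorem Units.val_mul_mul_inv_mul_inv {S : Type*} [Ring S] (A B : Sˣ) :
    ((A * B * A⁻¹ * B⁻¹ : Sˣ) : S) =
      1 + ((A * B : S) - B * A) * ((B * A)⁻¹ : Sˣ) := by
  rw [sub_mul, ← Units.val_mul B A, Units.mul_inv, add_sub_cancel, ← Units.val_mul,
    ← Units.val_mul, mul_inv_rev, ← mul_assoc]

theorem map_units_inv_eq_one {S T F : Type*} [Monoid S] [Monoid T] [FunLike F S T]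
    [MonoidHomClass F S T] (f : F) {u : Sˣ} (hu : f u = 1) : f ↑u⁻¹ = 1 := by
  rw [← mul_one (f _), ← hu, ← map_mul, Units.inv_mul, map_one, hu]

namespace PowerSeries

variable {R : Type*} [Ring R]

theorem exists_eq_one_add_X_pow_mul {f : R⟦X⟧} {n : ℕ} (hn : 1 ≤ n)
    (h0 : constantCoeff f = 1) (h : ∀ k, 1 ≤ k → k < n → coeff k f = 0) :
    ∃ g, f = 1 + X ^ n * g ∧ constantCoeff g = coeff n f := by
  obtain ⟨g, hg⟩ : X ^ n ∣ f - 1 := by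
    refine X_pow_dvd_iff.mpr fun k hk => ?_
    rcases Nat.eq_zero_or_pos k with rfl | hk0
    · simp [h0]
    · simp [h k hk0 hk, coeff_one, hk0.ne']
  refine ⟨g, by rw [← hg, add_sub_cancel], ?_⟩
  have := congrArg (coeff n) hg
  rw [coeff_X_pow_mul', if_pos le_rfl, Nat.sub_self, map_sub, coeff_one, if_neg (by omega),
    sub_zero] at this
  rw [← coeff_zero_eq_constantCoeff_apply, this]

theorem coe_commutator_eq_one_add_X_pow_mul {A B : R⟦X⟧ˣ} {F G : R⟦X⟧} {n m : ℕ}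
    (hA : (A : R⟦X⟧) = 1 + X ^ n * F) (hB : (B : R⟦X⟧) = 1 + X ^ m * G) :
    ((A * B * A⁻¹ * B⁻¹ : R⟦X⟧ˣ) : R⟦X⟧) =
      1 + X ^ (n + m) * ((F * G - G * F) * ((B * A)⁻¹ : R⟦X⟧ˣ).val) := by
  have hFG : (A * B : R⟦X⟧) - (B * A : R⟦X⟧) = X ^ (n + m) * (F * G - G * F) := by
    have hXF : X ^ n * F * (X ^ m * G) = X ^ (n + m) * (F * G) := by
      rw [(commute_X_pow F m).mul_mul_mul_comm, pow_add]
    have hXG : X ^ m * G * (X ^ n * F) = X ^ (n + m) * (G * F) := by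
      rw [(commute_X_pow G n).mul_mul_mul_comm, add_comm, pow_add]
    rw [hA, hB, mul_sub, ← hXF, ← hXG]
    noncomm_ring
  rw [Units.val_mul_mul_inv_mul_inv, hFG, mul_assoc]

end PowerSeries

/-- Leading term of a multiplicative commutator in `1 + tR⟦t⟧`:
if `A = 1 + a tⁿ + (higher)` and `B = 1 + b tᵐ + (higher)` (with `n, m ≥ 1`),
then `A * B * A⁻¹ * B⁻¹ = 1 + (ab - ba) t^(n+m) + (higher)`. -/
theorem stmt1 (R : Type*) [Ring R] (A B : (PowerSeries R)ˣ) (a b : R) (n m : ℕ)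
    (hn : 1 ≤ n) (hm : 1 ≤ m)
    (hA0 : PowerSeries.constantCoeff (A : PowerSeries R) = 1)
    (hA1 : ∀ k, 1 ≤ k → k < n → PowerSeries.coeff k (A : PowerSeries R) = 0)
    (hAn : PowerSeries.coeff n (A : PowerSeries R) = a)
    (hB0 : PowerSeries.constantCoeff (B : PowerSeries R) = 1)
    (hB1 : ∀ k, 1 ≤ k → k < m → PowerSeries.coeff k (B : PowerSeries R) = 0)
    (hBm : PowerSeries.coeff m (B : PowerSeries R) = b) :
    (∀ k, 1 ≤ k → k < n + m →
      PowerSeries.coeff k ((A * B * A⁻¹ * B⁻¹ : (PowerSeries R)ˣ) : PowerSeries R) = 0) ∧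
    PowerSeries.coeff (n + m)
      ((A * B * A⁻¹ * B⁻¹ : (PowerSeries R)ˣ) : PowerSeries R) = a * b - b * a := by
  obtain ⟨F, hA, hF⟩ := exists_eq_one_add_X_pow_mul hn hA0 hA1
  obtain ⟨G, hB, hG⟩ := exists_eq_one_add_X_pow_mul hm hB0 hB1
  have hBA : constantCoeff ((B * A : (PowerSeries R)ˣ) : PowerSeries R) = 1 := by
    simp [hA0, hB0]
  rw [coe_commutator_eq_one_add_X_pow_mul hA hB]
  refine ⟨fun k hk1 hk => ?_, ?_⟩
  · rw [map_add, coeff_one, if_neg (by omega), coeff_X_pow_mul', if_neg (by omega), add_zero]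
  · rw [map_add, coeff_one, if_neg (by omega), coeff_X_pow_mul', if_pos le_rfl, Nat.sub_self,
      coeff_zero_eq_constantCoeff_apply, map_mul, map_sub, map_mul, map_mul, hF, hG, hAn, hBm,
      map_units_inv_eq_one _ hBA, mul_one, zero_add]
end

section
/- Let R be a ring and let f, g ∈ R⟦t⟧ be power series, at least one of which has constant term zero. Then (1 - f·g)·(1 - g·f)⁻¹ lies in the kernel of the natural map from the group of power series with constant term 1 to the big Witt vector group W(R), i.e. 1 - fg and 1 - gf become equal after quotienting by the closure of the subgroup generated by commutators and elements (1+rst)(1+srt)⁻¹ for r,s ∈ R. -/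
/-!
Modulo the subgroup generated by the relations, power series with constant term `1` commute
with each other, and one never needs the `t`-adic closure (so `w = 1` works).
If `P` and `Q` both have constant term `0`, then `1 - PQ` and `1 - QP` are `u a` and `a' u` with
`u = 1 - P` and `a, a'` conjugate, hence equal. For `f = t f₁` and arbitrary `g`, splitting off
the constant term `c` of `g` reduces the claim to `g = c`; the same reduction applied to `c t`
and `f₁` leaves `1 - c d t` versus `1 - d c t` with `d = f₁(0)`, a defining relation.
-/

open PowerSeries

/-- The set of defining relations for `W(R)` inside the unit group of `R⟦t⟧`:
commutators of special units (constant term `1`), together with the elements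
`(1 + rst) * (1 + srt)⁻¹` for `r, s ∈ R`. -/
def WittRelations (R : Type*) [Ring R] : Set (PowerSeries R)ˣ :=
  {x | ∃ a b : (PowerSeries R)ˣ,
      PowerSeries.constantCoeff (a : PowerSeries R) = 1 ∧
      PowerSeries.constantCoeff (b : PowerSeries R) = 1 ∧
      x = a * b * a⁻¹ * b⁻¹} ∪
  {x | ∃ (r s : R) (u v : (PowerSeries R)ˣ),
      (u : PowerSeries R) = 1 + PowerSeries.C (r * s) * PowerSeries.X ∧
      (v : PowerSeries R) = 1 + PowerSeries.C (s * r) * PowerSeries.X ∧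
      x = u * v⁻¹}

section

variable {R : Type*} [Ring R]

theorem PowerSeries.isUnit_of_constantCoeff_eq_one {p : R⟦X⟧} (hp : constantCoeff p = 1) :
    IsUnit p :=
  isUnit_iff_constantCoeff.mpr (hp ▸ isUnit_one)

namespace WittRelations

theorem constantCoeff_eq_one_of_mem_closure {x : R⟦X⟧ˣ}
    (hx : x ∈ Subgroup.closure (WittRelations R)) : constantCoeff (x : R⟦X⟧) = 1 := by
  let K := (Units.map (constantCoeff (R := R)).toMonoidHom).ker
  have mem_K {y : R⟦X⟧ˣ} (hy : constantCoeff (y : R⟦X⟧) = 1) : y ∈ K := by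
    simpa [K, Units.ext_iff] using hy
  suffices Subgroup.closure (WittRelations R) ≤ K by simpa [K, Units.ext_iff] using this hx
  rw [Subgroup.closure_le]
  rintro _ (⟨a, b, ha, hb, rfl⟩ | ⟨r, s, u, v, hu, hv, rfl⟩)
  · exact mul_mem (mul_mem (mul_mem (mem_K ha) (mem_K hb)) (inv_mem (mem_K ha)))
      (inv_mem (mem_K hb))
  · exact mul_mem (mem_K (by simp [hu])) (inv_mem (mem_K (by simp [hv])))

theorem commutator_mem_closure {a b : R⟦X⟧ˣ} (ha : constantCoeff (a : R⟦X⟧) = 1)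
    (hb : constantCoeff (b : R⟦X⟧) = 1) :
    a * b * a⁻¹ * b⁻¹ ∈ Subgroup.closure (WittRelations R) :=
  Subgroup.subset_closure (Or.inl ⟨a, b, ha, hb, rfl⟩)

theorem conj_mem_closure {u x : R⟦X⟧ˣ} (hu : constantCoeff (u : R⟦X⟧) = 1)
    (hx : x ∈ Subgroup.closure (WittRelations R)) :
    u * x * u⁻¹ ∈ Subgroup.closure (WittRelations R) := by
  have := mul_mem (commutator_mem_closure hu (constantCoeff_eq_one_of_mem_closure hx)) hx
  rwa [show u * x * u⁻¹ * x⁻¹ * x = u * x * u⁻¹ by group] at this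

end WittRelations

/-- A strong form of equality in `W(R)`: no `t`-adic closure is taken. -/
def WittEquiv (p q : R⟦X⟧) : Prop :=
  ∃ h ∈ Subgroup.closure (WittRelations R), p = (h : R⟦X⟧) * q

namespace WittEquiv

variable {p q r : R⟦X⟧}

theorem symm (hpq : WittEquiv p q) : WittEquiv q p := by
  obtain ⟨h, hh, rfl⟩ := hpq
  exact ⟨h⁻¹, inv_mem hh, by rw [← mul_assoc, Units.inv_mul, one_mul]⟩

theorem trans (hpq : WittEquiv p q) (hqr : WittEquiv q r) : WittEquiv p r := by
  obtain ⟨h, hh, rfl⟩ := hpq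
  obtain ⟨h', hh', rfl⟩ := hqr
  exact ⟨h * h', mul_mem hh hh', by rw [Units.val_mul, mul_assoc]⟩

theorem mul_right (hpq : WittEquiv p q) (r : R⟦X⟧) : WittEquiv (p * r) (q * r) := by
  obtain ⟨h, hh, rfl⟩ := hpq
  exact ⟨h, hh, mul_assoc _ _ _⟩

theorem mul_left (hpq : WittEquiv p q) (hr : constantCoeff r = 1) :
    WittEquiv (r * p) (r * q) := by
  obtain ⟨h, hh, rfl⟩ := hpq
  obtain ⟨u, rfl⟩ := isUnit_of_constantCoeff_eq_one hr
  refine ⟨u * h * u⁻¹, WittRelations.conj_mem_closure hr hh, ?_⟩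
  simp only [Units.val_mul, mul_assoc, Units.inv_mul_cancel_left]

end WittEquiv

theorem SemiconjBy.wittEquiv {u a b : R⟦X⟧} (h : SemiconjBy u a b)
    (hu : constantCoeff u = 1) (ha : constantCoeff a = 1) : WittEquiv a b := by
  obtain ⟨x, rfl⟩ := isUnit_of_constantCoeff_eq_one hu
  obtain ⟨y, rfl⟩ := isUnit_of_constantCoeff_eq_one ha
  refine ⟨y * x * y⁻¹ * x⁻¹, WittRelations.commutator_mem_closure ha hu, ?_⟩
  have hb : b = x * y * x⁻¹ := by rw [h.eq, Units.mul_inv_cancel_right]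
  simp only [hb, Units.val_mul, mul_assoc, Units.inv_mul_cancel_left, Units.mul_inv, mul_one]

theorem wittEquiv_mul_comm {p q : R⟦X⟧} (hp : constantCoeff p = 1)
    (hq : constantCoeff q = 1) : WittEquiv (q * p) (p * q) :=
  SemiconjBy.wittEquiv (mul_assoc p q p).symm hp (by simp [hp, hq])

theorem wittEquiv_one_add_C_mul_X (r s : R) :
    WittEquiv (1 + C (r * s) * X) (1 + C (s * r) * X) := by
  obtain ⟨u, hu⟩ := isUnit_of_constantCoeff_eq_one (p := 1 + C (r * s) * X) (by simp)
  obtain ⟨v, hv⟩ := isUnit_of_constantCoeff_eq_one (p := 1 + C (s * r) * X) (by simp)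
  refine ⟨u * v⁻¹, Subgroup.subset_closure (Or.inr ⟨r, s, u, v, hu, hv, rfl⟩), ?_⟩
  rw [← hu, ← hv, Units.val_mul, mul_assoc, Units.inv_mul, mul_one]

theorem wittEquiv_one_sub_mul_comm_of_constantCoeff_eq_zero {P Q : R⟦X⟧}
    (hP : constantCoeff P = 0) (hQ : constantCoeff Q = 0) :
    WittEquiv (1 - P * Q) (1 - Q * P) := by
  obtain ⟨u, hu⟩ := isUnit_of_constantCoeff_eq_one (p := 1 - P) (by simp [hP])
  set W : R⟦X⟧ := ↑u⁻¹
  have hWu : W * (1 - P) = 1 := hu ▸ u.inv_mul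
  have huW : (1 - P) * W = 1 := hu ▸ u.mul_inv
  have hWP : W * P = W - 1 := by rw [← hWu]; noncomm_ring
  have hPW : P * W = W - 1 := by rw [← huW]; noncomm_ring
  have hW : constantCoeff W = 1 := by
    simpa [hP] using congrArg constantCoeff hWu
  have hPQ : 1 - P * Q = (1 - P) * (W * (1 - P * Q)) := by rw [← mul_assoc, huW, one_mul]
  have hQP : 1 - Q * P = (1 - Q * P) * W * (1 - P) := by rw [mul_assoc, hWu, mul_one]
  have hconj : SemiconjBy (1 - Q) (W * (1 - P * Q)) ((1 - Q * P) * W) :=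
    calc (1 - Q) * (W * (1 - P * Q)) = (1 - Q) * (W - W * P * Q) := by noncomm_ring
      _ = (W - Q * (W - 1)) * (1 - Q) := by rw [hWP]; noncomm_ring
      _ = (1 - Q * P) * W * (1 - Q) := by rw [← hPW]; noncomm_ring
  rw [hPQ, hQP]
  exact (wittEquiv_mul_comm (by simp [hP, hQ, hW]) (by simp [hP])).trans
    ((hconj.wittEquiv (by simp [hQ]) (by simp [hP, hQ, hW])).mul_right _)

theorem wittEquiv_one_sub_mul_comm_of_C {F G : R⟦X⟧} (hF : constantCoeff F = 0)
    (h : WittEquiv (1 - F * C (constantCoeff G)) (1 - C (constantCoeff G) * F)) :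
    WittEquiv (1 - F * G) (1 - G * F) := by
  set b := C (constantCoeff G)
  obtain ⟨z, hz⟩ := isUnit_of_constantCoeff_eq_one (p := 1 - F * b) (by simp [hF])
  set W : R⟦X⟧ := ↑z⁻¹
  have hWz : W * (1 - F * b) = 1 := hz ▸ z.inv_mul
  have hFG : 1 - F * G = (1 - F * ((G - b) * W)) * (1 - F * b) :=
    calc 1 - F * G = 1 - F * b - F * (G - b) := by noncomm_ring
      _ = 1 - F * b - F * (G - b) * (W * (1 - F * b)) := by rw [hWz, mul_one]
      _ = _ := by noncomm_ring
  have hGF : 1 - G * F = (1 - (G - b) * W * F) * (1 - b * F) :=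
    calc 1 - G * F = 1 - b * F - (G - b) * F := by noncomm_ring
      _ = 1 - b * F - (G - b) * (W * (1 - F * b) * F) := by rw [hWz, one_mul]
      _ = _ := by noncomm_ring
  rw [hFG, hGF]
  exact ((wittEquiv_one_sub_mul_comm_of_constantCoeff_eq_zero hF (by simp [b])).mul_right _).trans
    (h.mul_left (by simp [hF]))

theorem wittEquiv_one_sub_mul_comm {f g : R⟦X⟧} (hf : constantCoeff f = 0) :
    WittEquiv (1 - f * g) (1 - g * f) := by
  refine wittEquiv_one_sub_mul_comm_of_C hf ?_
  obtain ⟨f₁, rfl⟩ := X_dvd_iff.mpr hf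
  set c := constantCoeff g
  have hX : ∀ φ : R⟦X⟧, φ * X = X * φ := fun φ ↦ (commute_X φ).eq
  have key := wittEquiv_one_sub_mul_comm_of_C (F := C c * X) (G := f₁) (by simp) <| by
    convert wittEquiv_one_add_C_mul_X (-c) (constantCoeff f₁) using 1 <;>
      simp only [map_mul, map_neg, ← mul_assoc, hX, sub_eq_add_neg, neg_mul, mul_neg]
  convert key.symm using 2 <;> simp only [← mul_assoc, hX]

end

/-- If `f, g ∈ R⟦t⟧` and at least one of them has constant term zero, then
`1 - fg` and `1 - gf` become equal in `W(R)`, i.e. `(1 - fg)(1 - gf)⁻¹` lies in the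
`t`-adic closure of the subgroup generated by commutators and the elements
`(1 + rst)(1 + srt)⁻¹`: for each `n` we can write `1 - fg = w * h * (1 - gf)` with `h`
in the subgroup generated by the relations and `w ∈ 1 + tⁿ R⟦t⟧`. -/
theorem stmt2 (R : Type*) [Ring R] (f g : PowerSeries R)
    (hfg : PowerSeries.constantCoeff f = 0 ∨ PowerSeries.constantCoeff g = 0) :
    ∀ n : ℕ, ∃ h : (PowerSeries R)ˣ, h ∈ Subgroup.closure (WittRelations R) ∧
      ∃ w : PowerSeries R, PowerSeries.constantCoeff w = 1 ∧
        (∀ k, 1 ≤ k → k < n → PowerSeries.coeff k w = 0) ∧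
        (1 - f * g) = w * (h : PowerSeries R) * (1 - g * f) := by
  intro n
  obtain ⟨h, hh, hfg⟩ : WittEquiv (1 - f * g) (1 - g * f) :=
    hfg.elim wittEquiv_one_sub_mul_comm fun hg ↦ (wittEquiv_one_sub_mul_comm hg).symm
  refine ⟨h, hh, 1, map_one _, fun k hk _ ↦ ?_, by rw [one_mul, hfg]⟩
  rw [coeff_one, if_neg (by omega)]
end

section
/- Let R be a commutative ring and A ∈ Matₙ(R). The negative logarithmic derivative of χ_A(t) = det(1 - At) satisfies -χ_A'(t)·χ_A(t)⁻¹ = tr(A) + tr(A²)·t + tr(A³)·t² + ... in R⟦t⟧; i.e. the coefficient of tᵏ of -χ_A'/χ_A equals tr(A^{k+1}) for all k ≥ 0. -/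
/-!
Jacobi's formula `D (det M) = tr (adj M · D M)` holds for every derivation `D`. Over `R⟦X⟧` the
matrix `M = 1 - X A` is inverted by the geometric series `N = ∑ Aᵏ Xᵏ`, so `adj M = det M · N`,
and `d⁄dX M = -A`. Hence `-χ_A' = χ_A · tr (A N)`, and the `k`-th coefficient of `tr (A N)` is
`tr (A^(k+1))`.
-/

open Polynomial PowerSeries Matrix

namespace Derivation

theorem map_prod {R A M : Type*} [CommSemiring R] [CommSemiring A] [AddCommMonoid M]
    [Algebra R A] [Module A M] [Module R M] (D : Derivation R A M) {ι : Type*} [DecidableEq ι]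
    (s : Finset ι) (f : ι → A) :
    D (∏ i ∈ s, f i) = ∑ i ∈ s, (∏ j ∈ s.erase i, f j) • D (f i) := by
  induction s using Finset.induction_on with
  | empty => simp
  | @insert a s ha ih =>
    rw [Finset.prod_insert ha, D.leibniz, Finset.sum_insert ha, Finset.erase_insert ha, ih,
      Finset.smul_sum, add_comm]
    congr 1
    refine Finset.sum_congr rfl fun i hi => ?_
    rw [Finset.erase_insert_of_ne (ne_of_mem_of_not_mem hi ha).symm,
      Finset.prod_insert (fun h => ha (Finset.mem_of_mem_erase h)), mul_smul]

variable {R S : Type*} [CommRing R] [CommRing S] [Algebra R S] {n : Type*} [Fintype n]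
  [DecidableEq n]

theorem map_det_eq_sum_det_updateCol (D : Derivation R S S) (M : Matrix n n S) :
    D M.det = ∑ j, (M.updateCol j fun i => D (M i j)).det := by
  simp only [det_apply', map_sum, D.leibniz, D.map_intCast, smul_eq_mul, mul_zero, add_zero,
    D.map_prod, Finset.mul_sum]
  rw [Finset.sum_comm]
  refine Fintype.sum_congr _ _ fun j => Fintype.sum_congr _ _ fun σ => ?_
  rw [← Finset.mul_prod_erase _ _ (Finset.mem_univ j), updateCol_self,
    Finset.prod_congr rfl fun i hi => updateCol_ne (Finset.ne_of_mem_erase hi)]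
  ring

theorem map_det (D : Derivation R S S) (M : Matrix n n S) :
    D M.det = trace (adjugate M * M.map D) := by
  simp only [D.map_det_eq_sum_det_updateCol, ← cramer_apply, cramer_eq_adjugate_mulVec, trace,
    diag_apply, mul_apply, mulVec, dotProduct, map_apply]

end Derivation

namespace Matrix

variable {R : Type*} [CommRing R] {n : Type*} [Fintype n] [DecidableEq n]

def geomPowerSeries (A : Matrix n n R) : Matrix n n R⟦X⟧ :=
  of fun i j => PowerSeries.mk fun k => (A ^ k) i j

theorem map_coeff_map_C_mul_geomPowerSeries (A : Matrix n n R) (k : ℕ) :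
    (A.map PowerSeries.C * geomPowerSeries A).map (coeff k) = A ^ (k + 1) := by
  ext i j
  simp [geomPowerSeries, mul_apply, map_sum, pow_succ']

theorem one_sub_X_smul_mul_geomPowerSeries (A : Matrix n n R) :
    (1 - (X : R⟦X⟧) • A.map PowerSeries.C) * geomPowerSeries A = 1 := by
  rw [sub_mul, one_mul, smul_mul, sub_eq_iff_eq_add]
  ext i j k
  rcases k with _ | k
  · by_cases h : i = j <;> simp [geomPowerSeries, h]
  · have hk := congr_fun₂ (map_coeff_map_C_mul_geomPowerSeries A k) i j
    rw [map_apply] at hk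
    simp only [add_apply, smul_apply, smul_eq_mul, map_add, coeff_succ_X_mul, hk]
    rcases eq_or_ne i j with rfl | h <;> simp [geomPowerSeries, PowerSeries.coeff_one, *]

theorem adjugate_one_sub_X_smul (A : Matrix n n R) :
    adjugate (1 - (X : R⟦X⟧) • A.map PowerSeries.C) =
      det (1 - (X : R⟦X⟧) • A.map PowerSeries.C) • geomPowerSeries A := by
  set M := 1 - (X : R⟦X⟧) • A.map PowerSeries.C
  calc adjugate M = adjugate M * M * geomPowerSeries A := by
        rw [mul_assoc, one_sub_X_smul_mul_geomPowerSeries, mul_one]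
    _ = det M • geomPowerSeries A := by rw [adjugate_mul, smul_mul, one_mul]

theorem derivative_det_one_sub_X_smul (A : Matrix n n R) :
    d⁄dX R (det (1 - (X : R⟦X⟧) • A.map PowerSeries.C)) =
      -(det (1 - (X : R⟦X⟧) • A.map PowerSeries.C) *
        trace (A.map PowerSeries.C * geomPowerSeries A)) := by
  have hderiv : (1 - (X : R⟦X⟧) • A.map PowerSeries.C).map (d⁄dX R) = -A.map PowerSeries.C := by
    ext i j
    simp [one_apply, apply_ite]
  rw [Derivation.map_det, hderiv, adjugate_one_sub_X_smul, mul_neg, trace_neg, smul_mul,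
    trace_smul, trace_mul_comm, smul_eq_mul]

theorem coe_charpolyRev (A : Matrix n n R) :
    (A.charpolyRev : R⟦X⟧) = det (1 - (X : R⟦X⟧) • A.map PowerSeries.C) := by
  rw [charpolyRev, ← Polynomial.coeToPowerSeries.ringHom_apply, RingHom.map_det]
  congr 1
  ext i j : 1
  rcases eq_or_ne i j with rfl | h <;> simp [*, mul_comm (PowerSeries.C _)]

end Matrix

/-- For a commutative ring `R` and `A ∈ Matₙ(R)`, the negative logarithmic derivative of
`χ_A(t) = det(1 - A t)` satisfies `-χ_A'·χ_A⁻¹ = tr(A) + tr(A²) t + tr(A³) t² + ⋯`: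
the coefficient of `tᵏ` equals `tr(A^(k+1))`. -/
theorem stmt9 (R : Type*) [CommRing R] (n : ℕ) (A : Matrix (Fin n) (Fin n) R)
    (u : (PowerSeries R)ˣ)
    (hu : (u : PowerSeries R) =
      ((Matrix.det (1 - (Polynomial.X : R[X]) • A.map Polynomial.C) : R[X]) : PowerSeries R)) :
    ∀ k : ℕ, PowerSeries.coeff (R := R) k
        (-(PowerSeries.derivative R (u : PowerSeries R) *
            ((u⁻¹ : (PowerSeries R)ˣ) : PowerSeries R))) =
      Matrix.trace (A ^ (k + 1)) := by
  intro k
  have hu' : (u : R⟦X⟧) = det (1 - (X : R⟦X⟧) • A.map PowerSeries.C) :=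
    hu.trans A.coe_charpolyRev
  have hlog : -(d⁄dX R (u : R⟦X⟧) * ↑u⁻¹) = trace (A.map PowerSeries.C * geomPowerSeries A) := by
    rw [hu', derivative_det_one_sub_X_smul, ← hu', neg_mul, neg_neg, mul_right_comm,
      Units.mul_inv, one_mul]
  rw [hlog, AddMonoidHom.map_trace, map_coeff_map_C_mul_geomPowerSeries]
end
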